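/- For every integer n ≥ 1, a(n) − 2n is negative and b(n) − 2n is nonnegative; that is, a(n) < 2n and b(n) ≥ 2n. -/

import Mathlib

/-- `a n` is the `n`-th positive integer `k` (1-indexed, in increasing order) such that
the fractional part `{k·√2}` is less than `1/2`. -/
noncomputable def a (n : ℕ) : ℕ :=
  Nat.nth (fun k => 0 < k ∧ Int.fract ((k : ℝ) * Real.sqrt 2) < 1 / 2) (n - 1)

/-- `b n` is the `n`-th positive integer `k` (1-indexed, in increasing order) such that
the fractional part `{k·√2}` is at least `1/2`. -/
noncomputable def b (n : ℕ) : ℕ :=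
  Nat.nth (fun k => 0 < k ∧ 1 / 2 ≤ Int.fract ((k : ℝ) * Real.sqrt 2)) (n - 1)

/-!
Since `{k√2} < 1/2` exactly when `⌊2√2 k⌋` is even, both inequalities say that
`S m = ∑_{k ≤ m} (-1)^⌊2√2 k⌋` is positive at `m = 2n - 1`; as `S m ≡ m (mod 2)`, it is enough
that `S ≥ 0`. If `p₀/q₀` and `p₁/q₁` are consecutive convergents of `β`, best approximation gives
`⌊β (q₀ + t)⌋ = p₀ + ⌊β t⌋` for `0 < t < q₁`, hence `S (q₀ + t) = S q₀ ± S t`. For the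
convergents `pᵢ/qᵢ` of `2√2 = [2; 1, 4, 1, 4, …]` this yields `S q₂ⱼ = 1` and `S q₂ⱼ₊₁ = j + 1`,
and induction along the expansion `m = qᵢ + t` gives `0 ≤ S m ≤ j + 1` for `m < q₂ⱼ₊₂`.
-/

theorem Int.even_floor_two_mul_iff {α : Type*} [Field α] [LinearOrder α] [IsStrictOrderedRing α]
    [FloorRing α] (x : α) : Even ⌊2 * x⌋ ↔ Int.fract x < 1 / 2 := by
  have hsplit : ⌊2 * x⌋ = 2 * ⌊x⌋ + ⌊2 * Int.fract x⌋ := by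
    rw [← Int.floor_intCast_add, Int.fract]
    push_cast
    ring_nf
  have h₀ := Int.fract_nonneg x
  have h₁ := Int.fract_lt_one x
  by_cases hx : Int.fract x < 1 / 2
  · have : ⌊2 * Int.fract x⌋ = 0 := Int.floor_eq_zero_iff.mpr ⟨by positivity, by linarith⟩
    rw [hsplit, this, add_zero]
    exact iff_of_true (even_two_mul _) hx
  · have : ⌊2 * Int.fract x⌋ = 1 := by
      rw [Int.floor_eq_iff]
      push_cast
      constructor <;> linarith
    rw [hsplit, this]
    exact iff_of_false (Int.not_even_two_mul_add_one _) hx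

section Convergents

/- `p₀/q₀` and `p₁/q₁` play the role of consecutive convergents of `β`: all that is used is that
they form a unimodular matrix and approximate `β` from opposite sides. -/
variable {β : ℝ} {q₀ p₀ q₁ p₁ : ℤ}

theorem eq_of_abs_mul_sub_le (hq₀ : 0 < q₀) (hdet : IsUnit (p₁ * q₀ - p₀ * q₁))
    (hsign : (β * q₀ - p₀) * (β * q₁ - p₁) < 0) {t u : ℤ} (ht : 0 < t) (htq : t < q₁)
    (h : |β * t - u| ≤ |β * q₀ - p₀|) : t = q₀ ∧ u = p₀ := by
  obtain ⟨x, y, rfl, rfl⟩ : ∃ x y : ℤ, t = x * q₀ + y * q₁ ∧ u = x * p₀ + y * p₁ := by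
    have hD := Int.isUnit_mul_self hdet
    exact ⟨(p₁ * q₀ - p₀ * q₁) * (p₁ * t - q₁ * u), (p₁ * q₀ - p₀ * q₁) * (q₀ * u - p₀ * t),
      by linear_combination (-t) * hD, by linear_combination (-u) * hD⟩
  have hsq : (x * (β * q₀ - p₀) + y * (β * q₁ - p₁)) ^ 2 ≤ (β * q₀ - p₀) ^ 2 := by
    refine sq_le_sq.mpr (le_of_eq_of_le ?_ h)
    push_cast
    ring_nf
  have he₀ : β * q₀ - p₀ ≠ 0 := fun h₀ => by simp [h₀] at hsign
  -- `0 < x q₀ + y q₁ < q₁` forces `x` and `y` to have opposite signs, unless `y = 0`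
  obtain ⟨rfl, hx⟩ | hxy : (y = 0 ∧ 0 < x) ∨ x * y < 0 := by
    rcases lt_trichotomy y 0 with hy | rfl | hy
    · have hx : 0 < x := by nlinarith
      exact Or.inr (mul_neg_of_pos_of_neg hx hy)
    · exact Or.inl ⟨rfl, pos_of_mul_pos_left (by simpa using ht) hq₀.le⟩
    · have hx : x < 0 := by nlinarith
      exact Or.inr (mul_neg_of_neg_of_pos hx hy)
  · obtain rfl : x = 1 := by
      have hx₁ : (x : ℝ) ^ 2 ≤ 1 := by
        simp only [Int.cast_zero, zero_mul, add_zero, mul_pow] at hsq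
        exact le_of_mul_le_mul_right (by simpa using hsq) (by positivity)
      have : x ^ 2 ≤ 1 := by exact_mod_cast hx₁
      nlinarith
    simp
  · -- the two errors now point the same way and add up to more than `|β q₀ - p₀|`
    exfalso
    have hxy' : (x : ℝ) * y ≤ -1 := by exact_mod_cast Int.le_sub_one_of_lt hxy
    have hx₂ : (1 : ℝ) ≤ (x : ℝ) ^ 2 := by
      have hx : x ≠ 0 := by rintro rfl; simp at hxy
      exact_mod_cast (one_le_sq_iff_one_le_abs _).mpr (Int.one_le_abs hx)
    nlinarith [mul_nonneg (sub_nonneg.mpr hx₂) (sq_nonneg (β * q₀ - p₀)),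
      sq_nonneg ((y : ℝ) * (β * q₁ - p₁)), sq_pos_of_ne_zero he₀]

theorem floor_mul_add_eq (hq₀ : 0 < q₀) (hdet : IsUnit (p₁ * q₀ - p₀ * q₁))
    (hsign : (β * q₀ - p₀) * (β * q₁ - p₁) < 0) {t : ℤ} (ht : 0 < t) (htq : t < q₁) :
    ⌊β * (q₀ + t)⌋ = p₀ + ⌊β * t⌋ := by
  have hf₀ := Int.fract_nonneg (β * t)
  have hf₁ := Int.fract_lt_one (β * t)
  have hfract := Int.self_sub_floor (β * t)
  suffices 0 ≤ β * q₀ - p₀ + Int.fract (β * t) ∧ β * q₀ - p₀ + Int.fract (β * t) < 1 by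
    rw [Int.floor_eq_iff]
    push_cast
    constructor <;> linarith
  have he₀ : β * q₀ - p₀ ≠ 0 := fun h₀ => by simp [h₀] at hsign
  rcases he₀.lt_or_gt with hneg | hpos
  · refine ⟨?_, by linarith⟩
    by_contra! hlt
    obtain ⟨rfl, hp₀⟩ := eq_of_abs_mul_sub_le hq₀ hdet hsign ht htq (u := ⌊β * t⌋)
      (by rw [hfract, abs_of_nonneg hf₀, abs_of_neg hneg]; linarith)
    rw [← hp₀] at hneg
    linarith
  · refine ⟨by linarith, ?_⟩
    by_contra! hge
    obtain ⟨rfl, hp₀⟩ := eq_of_abs_mul_sub_le hq₀ hdet hsign ht htq (u := ⌊β * t⌋ + 1)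
      (by rw [abs_of_pos hpos, abs_of_nonpos (by push_cast; linarith)]; push_cast; linarith)
    rw [← hp₀] at hpos
    push_cast at hpos
    linarith

end Convergents

noncomputable def floorSignSum (β : ℝ) (m : ℕ) : ℤ :=
  ∑ k ∈ Finset.Icc 1 m, (⌊β * k⌋.negOnePow : ℤ)

theorem floorSignSum_succ (β : ℝ) (m : ℕ) :
    floorSignSum β (m + 1) = floorSignSum β m + ⌊β * (m + 1 : ℕ)⌋.negOnePow :=
  Finset.sum_Icc_succ_top (by omega) _

theorem floorSignSum_add {β : ℝ} {q₀ q₁ : ℕ} {p₀ p₁ : ℤ} (hq₀ : 0 < q₀)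
    (hdet : IsUnit (p₁ * q₀ - p₀ * q₁)) (hsign : (β * q₀ - p₀) * (β * q₁ - p₁) < 0) {t : ℕ}
    (ht : t < q₁) :
    floorSignSum β (q₀ + t) = floorSignSum β q₀ + p₀.negOnePow * floorSignSum β t := by
  induction t with
  | zero => simp [floorSignSum]
  | succ t ih =>
    have hfloor := floor_mul_add_eq (β := β) (t := t + 1) (mod_cast hq₀) hdet (mod_cast hsign)
      (by positivity) (by omega)
    push_cast at hfloor
    rw [← add_assoc] at hfloor
    rw [← add_assoc, floorSignSum_succ, floorSignSum_succ, ih (by omega)]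
    push_cast
    rw [hfloor, Int.negOnePow_add]
    push_cast
    ring

namespace Sqrt8

/- `num i / den i` is the `i`-th convergent of `√8 = 2√2 = [2; 1, 4, 1, 4, …]`. -/
def den : ℕ → ℕ
  | 0 => 1
  | 1 => 1
  | i + 2 => (if Even i then 4 else 1) * den (i + 1) + den i

def num : ℕ → ℕ
  | 0 => 2
  | 1 => 3
  | i + 2 => (if Even i then 4 else 1) * num (i + 1) + num i

theorem den_add_two (i : ℕ) : den (i + 2) = (if Even i then 4 else 1) * den (i + 1) + den i := rfl

theorem num_add_two (i : ℕ) : num (i + 2) = (if Even i then 4 else 1) * num (i + 1) + num i := rfl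

theorem den_two_mul_add_two (j : ℕ) : den (2 * j + 2) = 4 * den (2 * j + 1) + den (2 * j) := by
  simp [den_add_two]

theorem den_two_mul_add_three (j : ℕ) : den (2 * j + 3) = den (2 * j + 2) + den (2 * j + 1) := by
  simp [den_add_two (2 * j + 1), parity_simps]

theorem num_two_mul_add_two (j : ℕ) : num (2 * j + 2) = 4 * num (2 * j + 1) + num (2 * j) := by
  simp [num_add_two]

theorem num_two_mul_add_three (j : ℕ) : num (2 * j + 3) = num (2 * j + 2) + num (2 * j + 1) := by
  simp [num_add_two (2 * j + 1), parity_simps]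

theorem den_pos : ∀ i, 0 < den i
  | 0 | 1 => Nat.one_pos
  | i + 2 => Nat.add_pos_right _ (den_pos i)

theorem monotone_den : Monotone den := by
  refine monotone_nat_of_le_succ fun i => ?_
  cases i with
  | zero => rfl
  | succ i =>
    rw [den_add_two]
    split_ifs <;> omega

theorem lt_den_succ : ∀ i, i < den (i + 1)
  | 0 => Nat.one_pos
  | 1 => by decide
  | i + 2 => by
    have := lt_den_succ (i + 1)
    have := den_pos (i + 1)
    rw [den_add_two]
    split_ifs <;> omega

theorem num_mod_two : ∀ i, num i % 2 = i % 2
  | 0 | 1 => rfl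
  | i + 2 => by
    have := num_mod_two i
    have := num_mod_two (i + 1)
    rw [num_add_two]
    split_ifs with h <;> simp only [Nat.even_iff] at h <;> omega

theorem negOnePow_num (i : ℕ) : (num i : ℤ).negOnePow = (i : ℤ).negOnePow := by
  rw [Int.negOnePow_eq_iff, Int.even_iff]
  have := num_mod_two i
  omega

theorem num_mul_den_sub (i : ℕ) : (num (i + 1) * den i - num i * den (i + 1) : ℤ) = (-1) ^ i := by
  induction i with
  | zero => rfl
  | succ i ih =>
    rw [num_add_two, den_add_two]
    push_cast
    linear_combination -ih

theorem isUnit_num_mul_den_sub (i : ℕ) :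
    IsUnit (num (i + 1) * den i - num i * den (i + 1) : ℤ) := by
  rw [num_mul_den_sub]
  exact isUnit_neg_one.pow i

theorem sq_two_mul_sqrt_two : (2 * √2) ^ 2 = 8 := by
  rw [mul_pow, Real.sq_sqrt zero_le_two]
  norm_num

theorem two_lt_two_mul_sqrt_two : 2 < 2 * √2 := by
  nlinarith [sq_two_mul_sqrt_two, Real.sqrt_nonneg 2]

theorem two_mul_sqrt_two_lt_three : 2 * √2 < 3 := by
  nlinarith [sq_two_mul_sqrt_two, Real.sqrt_nonneg 2]

noncomputable def err (i : ℕ) : ℝ := 2 * √2 * den i - num i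

theorem err_zero : err 0 = 2 * √2 - 2 := by norm_num [err, den, num]

theorem err_one : err 1 = 2 * √2 - 3 := by norm_num [err, den, num]

theorem err_two_mul_add_two (j : ℕ) : err (2 * j + 2) = 4 * err (2 * j + 1) + err (2 * j) := by
  simp only [err, den_two_mul_add_two, num_two_mul_add_two]
  push_cast
  ring

theorem err_two_mul_add_three (j : ℕ) :
    err (2 * j + 3) = err (2 * j + 2) + err (2 * j + 1) := by
  simp only [err, den_two_mul_add_three, num_two_mul_add_three]
  push_cast
  ring

/- Conjugation `√8 ↦ -√8` turns these into `num + den √8` being multiplied alternately by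
`(2 + √8) / 4` and by `2 + √8`. -/
theorem err_succ (j : ℕ) : 4 * err (2 * j + 1) = (2 - 2 * √2) * err (2 * j) ∧
    err (2 * j + 2) = (2 - 2 * √2) * err (2 * j + 1) := by
  induction j with
  | zero =>
    rw [err_two_mul_add_two, Nat.mul_zero, zero_add, err_zero, err_one]
    constructor <;> linear_combination sq_two_mul_sqrt_two
  | succ j ih =>
    have h₃ : err (2 * j + 3) = err (2 * j + 2) + err (2 * j + 1) := err_two_mul_add_three j
    have h₄ : err (2 * j + 4) = 4 * err (2 * j + 3) + err (2 * j + 2) :=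
      err_two_mul_add_two (j + 1)
    show 4 * err (2 * j + 3) = _ * err (2 * j + 2) ∧ err (2 * j + 4) = _ * err (2 * j + 3)
    have g₁ : 4 * err (2 * j + 3) = (2 - 2 * √2) * err (2 * j + 2) := by
      rw [h₃]
      linear_combination (2 + 2 * √2) * ih.2 - err (2 * j + 1) * sq_two_mul_sqrt_two
    refine ⟨g₁, ?_⟩
    rw [h₄]
    linear_combination (2 + 2 * √2) / 4 * g₁ - err (2 * j + 2) / 4 * sq_two_mul_sqrt_two

theorem err_two_mul_pos (j : ℕ) : 0 < err (2 * j) := by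
  induction j with
  | zero =>
    rw [Nat.mul_zero, err_zero]
    linarith [two_lt_two_mul_sqrt_two]
  | succ j ih =>
    obtain ⟨h₁, h₂⟩ := err_succ j
    have hβ := two_lt_two_mul_sqrt_two
    have : err (2 * j + 1) < 0 := by nlinarith
    rw [Nat.mul_succ, h₂]
    exact mul_pos_of_neg_of_neg (by linarith) this

theorem err_two_mul_add_one_neg (j : ℕ) : err (2 * j + 1) < 0 := by
  nlinarith [(err_succ j).1, err_two_mul_pos j, two_lt_two_mul_sqrt_two]

theorem err_mul_err_succ_neg (i : ℕ) : err i * err (i + 1) < 0 := by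
  obtain ⟨j, rfl | rfl⟩ := Nat.even_or_odd' i
  · exact mul_neg_of_pos_of_neg (err_two_mul_pos j) (err_two_mul_add_one_neg j)
  · exact mul_neg_of_neg_of_pos (err_two_mul_add_one_neg j) (err_two_mul_pos (j + 1))

theorem floorSignSum_den_add (i : ℕ) {t : ℕ} (ht : t < den (i + 1)) :
    floorSignSum (2 * √2) (den i + t) =
      floorSignSum (2 * √2) (den i) + (-1) ^ i * floorSignSum (2 * √2) t := by
  rw [floorSignSum_add (p₀ := num i) (p₁ := num (i + 1)) (den_pos i) (isUnit_num_mul_den_sub i)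
    (by simpa [err] using err_mul_err_succ_neg i) ht, negOnePow_num, Int.coe_negOnePow_natCast]

theorem floorSignSum_one : floorSignSum (2 * √2) 1 = 1 := by
  have : ⌊2 * √2⌋ = 2 := by
    rw [Int.floor_eq_iff]
    constructor <;> push_cast <;> linarith [two_lt_two_mul_sqrt_two, two_mul_sqrt_two_lt_three]
  simp [floorSignSum, this, Int.negOnePow_even 2 even_two]

theorem floorSignSum_den (j : ℕ) :
    floorSignSum (2 * √2) (den (2 * j)) = 1 ∧
      floorSignSum (2 * √2) (den (2 * j + 1)) = j + 1 := by
  induction j with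
  | zero => simp [den, floorSignSum_one]
  | succ j ih =>
    set u := den (2 * j + 1)
    have hu := den_pos (2 * j + 1)
    have hodd : ∀ t < den (2 * j + 2),
        floorSignSum (2 * √2) (u + t) = j + 1 - floorSignSum (2 * √2) t := by
      intro t ht
      rw [floorSignSum_den_add _ ht, ih.2, (odd_two_mul_add_one j).neg_one_pow]
      ring
    have hperiod : ∀ w, u + w < den (2 * j + 2) →
        floorSignSum (2 * √2) (u + (u + w)) = floorSignSum (2 * √2) w := by
      intro w hw
      rw [hodd _ (by omega), hodd w (by omega)]
      ring
    have hstep := den_two_mul_add_two j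
    have heven : floorSignSum (2 * √2) (den (2 * j + 2)) = 1 := by
      rw [hstep, show 4 * u + den (2 * j) = u + (u + (u + (u + den (2 * j)))) by ring,
        hperiod _ (by omega), hperiod _ (by omega), ih.1]
    refine ⟨heven, ?_⟩
    show floorSignSum (2 * √2) (den (2 * j + 3)) = _
    rw [den_two_mul_add_three, floorSignSum_den_add _ (by rw [den_two_mul_add_three]; omega), heven,
      Even.neg_one_pow ⟨j + 1, by ring⟩, ih.2]
    push_cast
    ring

theorem exists_den_le_lt {m : ℕ} (hm : 0 < m) : ∃ i, 0 < i ∧ den i ≤ m ∧ m < den (i + 1) := by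
  have hex : ∃ i, m < den (i + 1) := ⟨m, lt_den_succ m⟩
  obtain ⟨k, hk⟩ : ∃ k, Nat.find hex = k + 1 := by
    refine Nat.exists_eq_succ_of_ne_zero fun h => ?_
    have : m < den (0 + 1) := h ▸ Nat.find_spec hex
    exact absurd this (show ¬m < 1 by omega)
  exact ⟨k + 1, k.succ_pos, not_lt.mp (Nat.find_min hex (by omega)), hk ▸ Nat.find_spec hex⟩

theorem floorSignSum_bounds (m : ℕ) : 0 ≤ floorSignSum (2 * √2) m ∧
    ∀ j, m < den (2 * j + 2) → floorSignSum (2 * √2) m ≤ j + 1 := by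
  induction m using Nat.strong_induction_on with
  | _ m ih =>
  rcases Nat.eq_zero_or_pos m with rfl | hm
  · have h₀ : floorSignSum (2 * √2) 0 = 0 := by simp [floorSignSum]
    exact ⟨h₀.ge, fun j _ => by rw [h₀]; positivity⟩
  obtain ⟨i, hi, hdi, hmi⟩ := exists_den_le_lt hm
  obtain ⟨t, rfl⟩ := Nat.exists_eq_add_of_le hdi
  obtain ⟨ih₀, ih₁⟩ := ih t (by have := den_pos i; omega)
  rw [floorSignSum_den_add i (by omega)]
  obtain ⟨j, rfl | rfl⟩ := Nat.even_or_odd' i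
  · obtain ⟨k, rfl⟩ := Nat.exists_eq_succ_of_ne_zero (by omega : j ≠ 0)
    have hmi' : den (2 * k + 2) + t < den (2 * k + 3) := hmi
    have hSt := ih₁ k (by
      have := monotone_den (show 2 * k + 1 ≤ 2 * k + 2 by omega)
      have := den_two_mul_add_three k
      omega)
    rw [(floorSignSum_den (k + 1)).1, (even_two_mul _).neg_one_pow, one_mul]
    refine ⟨by linarith, fun j' hj' => ?_⟩
    have : k + 1 ≤ j' := by have := monotone_den.reflect_lt (hdi.trans_lt hj'); omega
    have : (k : ℤ) + 1 ≤ j' := by exact_mod_cast this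
    linarith
  · have hmi' : den (2 * j + 1) + t < den (2 * j + 2) := hmi
    have hSt := ih₁ j (by omega)
    rw [(floorSignSum_den j).2, (odd_two_mul_add_one j).neg_one_pow]
    refine ⟨by linarith, fun j' hj' => ?_⟩
    have : j ≤ j' := by have := monotone_den.reflect_lt (hdi.trans_lt hj'); omega
    have : (j : ℤ) ≤ j' := by exact_mod_cast this
    linarith

end Sqrt8

def LowerHalf (k : ℕ) : Prop := 0 < k ∧ Int.fract ((k : ℝ) * √2) < 1 / 2

def UpperHalf (k : ℕ) : Prop := 0 < k ∧ 1 / 2 ≤ Int.fract ((k : ℝ) * √2)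

theorem negOnePow_floor_two_mul_sqrt_two_mul (k : ℕ) :
    (⌊2 * √2 * k⌋.negOnePow : ℤ) = if Int.fract ((k : ℝ) * √2) < 1 / 2 then 1 else -1 := by
  rw [show 2 * √2 * k = 2 * (k * √2) by ring]
  split_ifs with h
  · rw [Int.negOnePow_even _ ((Int.even_floor_two_mul_iff _).mpr h), Units.val_one]
  · rw [Int.negOnePow_odd _ (Int.not_even_iff_odd.mp (mt (Int.even_floor_two_mul_iff _).mp h)),
      Units.val_neg, Units.val_one]

open Classical in
theorem count_lowerHalf (m : ℕ) :
    2 * (Nat.count LowerHalf (m + 1) : ℤ) = m + floorSignSum (2 * √2) m ∧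
      Nat.count LowerHalf (m + 1) + Nat.count UpperHalf (m + 1) = m := by
  induction m with
  | zero => simp [Nat.count_succ, LowerHalf, UpperHalf, floorSignSum]
  | succ m ih =>
    rw [Nat.count_succ LowerHalf, Nat.count_succ UpperHalf, floorSignSum_succ,
      negOnePow_floor_two_mul_sqrt_two_mul]
    by_cases h : Int.fract (((m + 1 : ℕ) : ℝ) * √2) < 1 / 2
    · have hL : LowerHalf (m + 1) := ⟨m.succ_pos, h⟩
      have hU : ¬UpperHalf (m + 1) := fun hU => (not_le.mpr h) hU.2
      rw [if_pos hL, if_neg hU, if_pos h]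
      push_cast
      omega
    · have hL : ¬LowerHalf (m + 1) := fun hL => h hL.2
      have hU : UpperHalf (m + 1) := ⟨m.succ_pos, not_lt.mp h⟩
      rw [if_neg hL, if_pos hU, if_neg h]
      push_cast
      omega

theorem infinite_upperHalf : {k | UpperHalf k}.Infinite := by
  refine Set.infinite_of_forall_exists_gt fun N =>
    ⟨Sqrt8.den (2 * N + 1) + 1, ⟨by omega, ?_⟩, by have := Sqrt8.lt_den_succ (2 * N); omega⟩
  have h := Sqrt8.floorSignSum_den_add (2 * N + 1) (t := 1)
    (by have := Sqrt8.lt_den_succ (2 * N + 1); omega)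
  rw [floorSignSum_succ, Sqrt8.floorSignSum_one, (odd_two_mul_add_one N).neg_one_pow,
    negOnePow_floor_two_mul_sqrt_two_mul] at h
  split_ifs at h with hlt
  · omega
  · exact not_lt.mp hlt

theorem stmt_2 (n : ℕ) (hn : 1 ≤ n) : a n < 2 * n ∧ 2 * n ≤ b n := by
  classical
  obtain ⟨hcount, hsum⟩ := count_lowerHalf (2 * n - 1)
  have hS := (Sqrt8.floorSignSum_bounds (2 * n - 1)).1
  rw [Nat.sub_add_cancel (by omega)] at hcount hsum
  constructor
  · exact Nat.nth_lt_of_lt_count (p := LowerHalf) (n := 2 * n) (k := n - 1) (by omega)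
  · exact (Nat.count_le_iff_le_nth (p := UpperHalf) (a := 2 * n) (b := n - 1)
      infinite_upperHalf).mp (by omega)
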